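/- Let X be a nonempty perfect Polish space and let E be an equivalence relation on X with all classes countable, which is σ-compact as a subset of X × X, and all of whose classes are dense in X. Then E admits no σ-compact transversal; that is, there is no σ-compact set T ⊆ X meeting every E-class in exactly one point. -/

import Mathlib

/-!
Suppose `T` were a σ-compact transversal and fix `t₀ ∈ T`. The saturation `S` of `T \ {t₀}` is
σ-compact (it is the projection of the σ-compact relation restricted to `X × (T \ {t₀})`) and
misses the dense class of `t₀`; so each of its compact pieces is closed with empty interior,
and `S` is meagre. The class of `t₀` is countable, hence meagre as `X` is perfect. But these two
sets cover `X`, contradicting the Baire category theorem.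
-/

open Set

lemma SetRel.preimage_eq_image_fst {X Y : Type*} (R : SetRel X Y) (t : Set Y) :
    R.preimage t = Prod.fst '' (R ∩ univ ×ˢ t) := by
  ext x
  simp [and_comm]

section

variable {X Y : Type*} [TopologicalSpace X] [TopologicalSpace Y]

lemma IsSigmaCompact.inter_isClosed {s t : Set X} (hs : IsSigmaCompact s) (ht : IsClosed t) :
    IsSigmaCompact (s ∩ t) := by
  obtain ⟨K, hK, rfl⟩ := hs
  rw [iUnion_inter]
  exact isSigmaCompact_iUnion_of_isCompact _ fun n => (hK n).inter_right ht

lemma IsSigmaCompact.inter_isOpen [TopologicalSpace.PseudoMetrizableSpace X] {s U : Set X}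
    (hs : IsSigmaCompact s) (hU : IsOpen U) : IsSigmaCompact (s ∩ U) := by
  let := TopologicalSpace.pseudoMetrizableSpacePseudoMetric X
  obtain ⟨F, hF, -, rfl, -⟩ := hU.exists_iUnion_isClosed
  rw [inter_iUnion]
  exact isSigmaCompact_iUnion _ fun n => hs.inter_isClosed (hF n)

lemma IsSigmaCompact.setRelPreimage [T2Space Y] {R : SetRel X Y} {t : Set Y}
    (hR : IsSigmaCompact R) (ht : IsSigmaCompact t) : IsSigmaCompact (R.preimage t) := by
  obtain ⟨K, hK, rfl⟩ := ht
  rw [SetRel.preimage_iUnion]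
  refine isSigmaCompact_iUnion _ fun n => ?_
  rw [SetRel.preimage_eq_image_fst]
  exact (hR.inter_isClosed (isClosed_univ.prod (hK n).isClosed)).image continuous_fst

lemma IsSigmaCompact.isMeagre_of_dense_compl [T2Space X] {s : Set X} (hs : IsSigmaCompact s)
    (hd : Dense sᶜ) : IsMeagre s := by
  obtain ⟨K, hK, rfl⟩ := hs
  refine isMeagre_iUnion fun n => IsNowhereDense.isMeagre ?_
  rw [(hK n).isClosed.isNowhereDense_iff, interior_eq_empty_iff_dense_compl]
  exact hd.mono (compl_subset_compl.mpr (subset_iUnion K n))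

lemma Set.Countable.isMeagre [T1Space X] [PerfectSpace X] {s : Set X} (hs : s.Countable) :
    IsMeagre s := by
  rw [IsMeagre, ← biUnion_of_singleton s, compl_iUnion₂]
  exact (countable_bInter_mem hs).mpr fun x _ =>
    residual_of_dense_open isOpen_compl_singleton (dense_compl_singleton x)

end

/-- A σ-compact countable equivalence relation with dense classes on a nonempty perfect Polish
space admits no σ-compact transversal. -/
theorem stmt_5 {X : Type*} [TopologicalSpace X] [PolishSpace X] [Nonempty X]
    (hperf : Perfect (Set.univ : Set X))
    (E : X → X → Prop) (hE : Equivalence E)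
    (hcount : ∀ x : X, {y : X | E x y}.Countable)
    (hσ : IsSigmaCompact {p : X × X | E p.1 p.2})
    (hdense : ∀ x : X, Dense {y : X | E x y}) :
    ¬ ∃ T : Set X, IsSigmaCompact T ∧ ∀ x : X, ∃! t : X, t ∈ T ∧ E x t := by
  have : PerfectSpace X := ⟨hperf.acc⟩
  rintro ⟨T, hT, hTuniq⟩
  obtain ⟨t₀, ⟨ht₀, -⟩, -⟩ := hTuniq (Classical.arbitrary X)
  let R : SetRel X X := {p | E p.1 p.2}
  have hS : IsMeagre (R.preimage (T \ {t₀})) := by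
    refine (hσ.setRelPreimage (hT.inter_isOpen isOpen_compl_singleton)).isMeagre_of_dense_compl
      ((hdense t₀).mono ?_)
    rintro y hy ⟨t, ⟨htT, htt₀⟩, hyt⟩
    exact htt₀ ((hTuniq t₀).unique ⟨htT, hE.trans hy hyt⟩ ⟨ht₀, hE.refl t₀⟩)
  have hcover : univ ⊆ R.preimage (T \ {t₀}) ∪ {y | E t₀ y} := by
    intro x _
    obtain ⟨t, ⟨htT, hxt⟩, -⟩ := hTuniq x
    by_cases htt₀ : t = t₀
    · exact Or.inr (hE.symm (htt₀ ▸ hxt))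
    · exact Or.inl ⟨t, ⟨htT, htt₀⟩, hxt⟩
  exact not_isMeagre_of_isOpen isOpen_univ univ_nonempty
    ((hS.union (hcount t₀).isMeagre).mono hcover)
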